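/- arXiv:2407.13344 — 2 statements merged into one kernel-verified Lean document; each statement's English description precedes it below -/
import Mathlib

section
/- Jensen's inequality for concave upper semicontinuous functions: Let E be a real Hausdorff locally convex topological vector space whose continuous linear functionals separate points, let X ⊆ E be a nonempty compact convex set, and let f : X → ℝ be bounded, upper semicontinuous, and concave (f(t•x + (1−t)•y) ≥ t*f(x) + (1−t)*f(y) for all x, y ∈ X and t ∈ [0,1]). If μ is a Borel probability measure on X with barycenter b ∈ X (i.e., g(b) = ∫ g dμ for every continuous affine g : X → ℝ), then ∫ f dμ ≤ f(b). -/
open Set MeasureTheory Filter Topology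

/-- A function `g : E → ℝ` is continuous and affine on the convex set `X`. -/
def IsContAffineOn {E : Type*} [AddCommGroup E] [Module ℝ E] [TopologicalSpace E]
    (X : Set E) (g : E → ℝ) : Prop :=
  ContinuousOn g X ∧ ∀ x ∈ X, ∀ y ∈ X, ∀ t ∈ Set.Icc (0:ℝ) 1,
    g (t • x + (1 - t) • y) = t * g x + (1 - t) * g y

/-- The hypograph of an upper semicontinuous function on a closed set is closed. -/
lemma isClosed_hypograph_of_usc {E : Type*} [TopologicalSpace E] {X : Set E} {f : E → ℝ}
    (hX : IsClosed X) (husc : UpperSemicontinuousOn f X) :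
    IsClosed {p : E × ℝ | p.1 ∈ X ∧ p.2 ≤ f p.1} := by
  rw [← isOpen_compl_iff, isOpen_iff_mem_nhds]
  intro p hp
  simp only [mem_compl_iff, mem_setOf_eq, not_and, not_le] at hp
  by_cases hpX : p.1 ∈ X
  · have hlt : f p.1 < p.2 := hp hpX
    set y : ℝ := (f p.1 + p.2) / 2 with hy
    have h1 : f p.1 < y := by rw [hy]; linarith
    have h2 : y < p.2 := by rw [hy]; linarith
    have := husc p.1 hpX y h1
    rw [Filter.eventually_iff, mem_nhdsWithin] at this
    obtain ⟨U, hUo, hpU, hUsub⟩ := this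
    have hmem : U ×ˢ Ioi y ∈ 𝓝 p :=
      prod_mem_nhds (hUo.mem_nhds hpU) (isOpen_Ioi.mem_nhds h2)
    filter_upwards [hmem] with q hq
    simp only [mem_prod, mem_Ioi] at hq
    simp only [mem_compl_iff, mem_setOf_eq, not_and, not_le]
    intro hqX
    have : f q.1 < y := hUsub ⟨hq.1, hqX⟩
    linarith [hq.2]
  · have hmem : Xᶜ ×ˢ (univ : Set ℝ) ∈ 𝓝 p :=
      prod_mem_nhds (hX.isOpen_compl.mem_nhds hpX) Filter.univ_mem
    filter_upwards [hmem] with q hq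
    simp only [mem_prod, mem_compl_iff] at hq
    simp only [mem_compl_iff, mem_setOf_eq, not_and, not_le]
    exact fun h => absurd h hq.1

/-- For an usc-on function, sublevel sets within `X` are relatively open. -/
lemma usc_sublevel_relatively_open {E : Type*} [TopologicalSpace E] {X : Set E} {f : E → ℝ}
    (husc : UpperSemicontinuousOn f X) (c : ℝ) :
    ∃ V : Set E, IsOpen V ∧ X ∩ {x | f x < c} = X ∩ V := by
  have key : ∀ x : (X ∩ {x | f x < c} : Set E), ∃ U : Set E, IsOpen U ∧ (x : E) ∈ U ∧
      U ∩ X ⊆ {z | f z < c} := by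
    rintro ⟨x, hxX, hxf⟩
    have := husc x hxX c hxf
    rw [Filter.eventually_iff, mem_nhdsWithin] at this
    obtain ⟨U, hUo, hxU, hUsub⟩ := this
    exact ⟨U, hUo, hxU, hUsub⟩
  choose U hUo hUmem hUsub using key
  refine ⟨⋃ x, U x, isOpen_iUnion hUo, ?_⟩
  ext z
  constructor
  · rintro ⟨hzX, hzf⟩
    exact ⟨hzX, mem_iUnion.2 ⟨⟨z, hzX, hzf⟩, hUmem _⟩⟩
  · rintro ⟨hzX, hzV⟩
    obtain ⟨x, hx⟩ := mem_iUnion.1 hzV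
    exact ⟨hzX, hUsub x ⟨hx, hzX⟩⟩

/-- Jensen's inequality: a bounded, upper semicontinuous, concave function on a compact convex
set satisfies `∫ f dμ ≤ f(b)` whenever `b` is the barycenter of the Borel probability
measure `μ`. -/
theorem integral_le_of_concave_upperSemicontinuous
    {E : Type*} [AddCommGroup E] [Module ℝ E] [TopologicalSpace E]
    [IsTopologicalAddGroup E] [ContinuousSMul ℝ E] [T2Space E]
    [LocallyConvexSpace ℝ E] [SeparatingDual ℝ E]
    [MeasurableSpace E] [BorelSpace E]
    (X : Set E) (hXne : X.Nonempty) (hXcomp : IsCompact X) (hXconv : Convex ℝ X)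
    (f : E → ℝ) (hbdd : ∃ C : ℝ, ∀ x ∈ X, |f x| ≤ C)
    (husc : UpperSemicontinuousOn f X)
    (hconc : ∀ x ∈ X, ∀ y ∈ X, ∀ t ∈ Icc (0:ℝ) 1,
      t * f x + (1 - t) * f y ≤ f (t • x + (1 - t) • y))
    (μ : Measure E) [IsProbabilityMeasure μ] (hμX : μ X = 1)
    (b : E) (hbX : b ∈ X)
    (hbary : ∀ g : E → ℝ, IsContAffineOn X g → g b = ∫ x in X, g x ∂μ) :
    (∫ x in X, f x ∂μ) ≤ f b := by
  classical
  obtain ⟨C, hC⟩ := hbdd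
  have hXclosed : IsClosed X := hXcomp.isClosed
  have hXm : MeasurableSet X := hXclosed.measurableSet
  -- f is integrable on X
  have hfm : Measurable (X.piecewise f fun _ => (0:ℝ)) := by
    apply measurable_of_Iio
    intro c
    have : (X.piecewise f fun _ => (0:ℝ)) ⁻¹' Iio c =
        (X ∩ {x | f x < c}) ∪ (Xᶜ ∩ {x : E | (0:ℝ) < c}) := by
      ext z
      by_cases hz : z ∈ X <;>
        simp [Set.piecewise, hz, mem_Iio]
    rw [this]
    obtain ⟨V, hVo, hVeq⟩ := usc_sublevel_relatively_open husc c
    apply MeasurableSet.union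
    · rw [hVeq]; exact hXm.inter hVo.measurableSet
    · by_cases h0c : (0:ℝ) < c
      · have he : {x : E | (0:ℝ) < c} = univ := by simp [h0c]
        rw [he]
        simpa using hXm.compl
      · have he : {x : E | (0:ℝ) < c} = (∅ : Set E) := by simp [h0c]
        rw [he]
        simp
  have hae : f =ᵐ[μ.restrict X] X.piecewise f fun _ => (0:ℝ) := by
    filter_upwards [ae_restrict_mem hXm] with x hx
    simp [Set.piecewise_eq_of_mem _ _ _ hx]
  have hfint : IntegrableOn f X μ := by
    have hint : Integrable (X.piecewise f fun _ => (0:ℝ)) (μ.restrict X) := by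
      apply (integrable_const (max C 0)).mono' hfm.aestronglyMeasurable
      filter_upwards [ae_restrict_mem hXm] with x hx
      rw [Set.piecewise_eq_of_mem _ _ _ hx, Real.norm_eq_abs]
      exact le_max_of_le_left (hC x hx)
    exact hint.congr hae.symm
  -- ε-argument
  apply le_of_forall_pos_le_add
  intro ε hε
  -- separate (b, f b + ε) from the hypograph
  set K : Set (E × ℝ) := {p : E × ℝ | p.1 ∈ X ∧ p.2 ≤ f p.1} with hK
  have hKconv : Convex ℝ K := by
    have hconcOn : ConcaveOn ℝ X f := by
      constructor
      · exact hXconv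
      · intro x hx y hy a c ha hc hac
        have hc' : c = 1 - a := by linarith
        have := hconc x hx y hy a ⟨ha, by linarith⟩
        rw [hc']
        simpa [smul_eq_mul] using this
    exact hconcOn.convex_hypograph
  have hKclosed : IsClosed K := isClosed_hypograph_of_usc hXclosed husc
  have hpK : (b, f b + ε) ∉ K := by
    rintro ⟨-, h⟩
    simp only at h
    linarith
  obtain ⟨φ, u, hφK, hφp⟩ := geometric_hahn_banach_closed_point hKconv hKclosed hpK
  set ψ : E → ℝ := fun x => φ (x, 0) with hψ
  set c : ℝ := φ (0, 1) with hc
  have hφ_eq : ∀ x : E, ∀ r : ℝ, φ (x, r) = ψ x + r * c := by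
    intro x r
    have : (x, r) = (x, (0:ℝ)) + r • ((0:E), (1:ℝ)) := by
      simp [Prod.ext_iff]
    rw [this, map_add, φ.map_smul]
    simp [hψ, hc, smul_eq_mul]
  -- c > 0
  have hcpos : 0 < c := by
    rcases lt_trichotomy c 0 with hneg | hzero | hpos
    · exfalso
      obtain ⟨x₀, hx₀⟩ := hXne
      set r : ℝ := min (f x₀) ((u - ψ x₀) / c) with hr
      have hrK : (x₀, r) ∈ K := ⟨hx₀, min_le_left _ _⟩
      have h1 : φ (x₀, r) < u := hφK _ hrK
      rw [hφ_eq] at h1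
      have h2 : r ≤ (u - ψ x₀) / c := min_le_right _ _
      have h3 : u - ψ x₀ ≤ r * c := by
        rw [le_div_iff_of_neg hneg] at h2
        linarith [h2]
      linarith
    · exfalso
      have h1 : φ (b, f b) < u := hφK _ ⟨hbX, le_refl _⟩
      rw [hφ_eq] at h1
      rw [hφ_eq] at hφp
      rw [hzero] at h1 hφp
      simp only [mul_zero, add_zero] at h1 hφp
      linarith
    · exact hpos
  set g : E → ℝ := fun x => (u - ψ x) / c with hg
  have hψcont : Continuous ψ := by
    exact φ.continuous.comp (continuous_id.prodMk continuous_const)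
  have hψadd : ∀ x y : E, ψ (x + y) = ψ x + ψ y := by
    intro x y
    have : ((x + y, (0:ℝ)) : E × ℝ) = (x, 0) + (y, 0) := by simp [Prod.ext_iff]
    simp only [hψ]; rw [this, map_add]
  have hψsmul : ∀ (t : ℝ) (x : E), ψ (t • x) = t * ψ x := by
    intro t x
    have : ((t • x, (0:ℝ)) : E × ℝ) = t • ((x, (0:ℝ)) : E × ℝ) := by
      simp [Prod.ext_iff]
    simp only [hψ]; rw [this, φ.map_smul]; simp [smul_eq_mul]
  have hgaff : IsContAffineOn X g := by
    constructor
    · exact ((continuous_const.sub hψcont).div_const c).continuousOn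
    · intro x _ y _ t _
      simp only [hg]
      rw [hψadd, hψsmul, hψsmul]
      field_simp
      ring
  have hgb : g b = ∫ x in X, g x ∂μ := hbary g hgaff
  have hfg : ∀ x ∈ X, f x ≤ g x := by
    intro x hx
    have h1 : φ (x, f x) < u := hφK _ ⟨hx, le_refl _⟩
    rw [hφ_eq] at h1
    rw [hg]
    rw [le_div_iff₀ hcpos]
    linarith
  have hgblt : g b < f b + ε := by
    have := hφp
    rw [hφ_eq] at this
    rw [hg, div_lt_iff₀ hcpos]
    linarith
  have hgint : IntegrableOn g X μ :=
    (((continuous_const.sub hψcont).div_const c).continuousOn).integrableOn_compact hXcomp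
  calc (∫ x in X, f x ∂μ) ≤ ∫ x in X, g x ∂μ :=
        setIntegral_mono_on hfint hgint hXm hfg
    _ = g b := hgb.symm
    _ ≤ f b + ε := le_of_lt hgblt
end

section
/- Let E be a real Hausdorff locally convex topological vector space whose continuous linear functionals separate points, let X ⊆ E be a nonempty compact convex set that is metrizable as a topological space, and let F ⊆ X be a closed face of X. If μ is a boundary measure on the compact convex set F (a Borel probability measure on F maximal in the Choquet order of F), then its pushforward along the inclusion F ↪ X is a boundary measure on X (maximal in the Choquet order of X). -/
open Set MeasureTheory

/-- The Choquet order on Borel probability measures concentrated on a compact convex set `K`: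
`μ ≼ ν` iff `∫ f dμ ≤ ∫ f dν` for every continuous convex function `f` on `K`. -/
def ChoquetLE {E : Type*} [AddCommGroup E] [Module ℝ E] [TopologicalSpace E]
    [MeasurableSpace E] (K : Set E) (μ ν : MeasureTheory.Measure E) : Prop :=
  ∀ f : E → ℝ, ContinuousOn f K →
    (∀ x ∈ K, ∀ y ∈ K, ∀ t ∈ Set.Icc (0:ℝ) 1,
      f (t • x + (1 - t) • y) ≤ t * f x + (1 - t) * f y) →
    (∫ x in K, f x ∂μ) ≤ ∫ x in K, f x ∂ν

section Aux

open Pointwise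

variable {E : Type*} [AddCommGroup E] [Module ℝ E] [TopologicalSpace E]
    [IsTopologicalAddGroup E] [ContinuousSMul ℝ E]

/-- In a topological additive group, the closure of a set is contained in the set plus any
neighborhood of zero. -/
lemma aux_closure_subset_add {s W : Set E} (hW : W ∈ nhds (0:E)) : closure s ⊆ s + W := by
  intro x hx
  have hV : (fun v : E => x + v) '' (Neg.neg ⁻¹' W) ∈ nhds x := by
    have hnW : Neg.neg ⁻¹' W ∈ nhds (0:E) := by
      have : ContinuousAt (Neg.neg : E → E) 0 := continuous_neg.continuousAt
      simpa using this.preimage_mem_nhds (by simpa using hW)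
    rw [← map_add_left_nhds_zero x]
    exact Filter.image_mem_map hnW
  obtain ⟨y, hyV, hys⟩ := mem_closure_iff_nhds.1 hx _ hV
  obtain ⟨v, hv, hxy⟩ := hyV
  have hxy' : x + v = y := hxy
  exact ⟨y, hys, -v, hv, by rw [← hxy']; simp⟩

/-- The convex join of two compact sets is compact. -/
lemma aux_isCompact_convexJoin {s t : Set E} (hs : IsCompact s) (ht : IsCompact t) :
    IsCompact (convexJoin ℝ s t) := by
  have himg : convexJoin ℝ s t =
      (fun p : (E × E) × ℝ => (1 - p.2) • p.1.1 + p.2 • p.1.2) '' ((s ×ˢ t) ×ˢ Icc (0:ℝ) 1) := by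
    ext x
    constructor
    · intro hx
      rw [mem_convexJoin] at hx
      obtain ⟨a, ha, b, hb, hseg⟩ := hx
      rw [segment_eq_image] at hseg
      obtain ⟨θ, hθ, rfl⟩ := hseg
      exact ⟨((a, b), θ), ⟨⟨ha, hb⟩, hθ⟩, rfl⟩
    · rintro ⟨⟨⟨a, b⟩, θ⟩, ⟨⟨ha, hb⟩, hθ⟩, rfl⟩
      rw [mem_convexJoin]
      refine ⟨a, ha, b, hb, ?_⟩
      rw [segment_eq_image]
      exact ⟨θ, hθ, rfl⟩
  rw [himg]
  refine (((hs.prod ht)).prod isCompact_Icc).image ?_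
  exact ((continuous_const.sub continuous_snd).smul
      (continuous_fst.comp continuous_fst)).add
    (continuous_snd.smul (continuous_snd.comp continuous_fst))

/-- The convex hull of a finite union of nonempty compact convex sets is compact. -/
lemma aux_isCompact_convexHull_biUnion {ι : Type*} (s : Finset ι) (hne : s.Nonempty)
    (K : ι → Set E) (hcomp : ∀ i ∈ s, IsCompact (K i)) (hconv : ∀ i ∈ s, Convex ℝ (K i))
    (hKne : ∀ i ∈ s, (K i).Nonempty) :
    IsCompact (convexHull ℝ (⋃ i ∈ s, K i)) := by
  induction hne using Finset.Nonempty.cons_induction with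
  | singleton a =>
    have : (⋃ i ∈ ({a} : Finset ι), K i) = K a := by simp
    rw [this, (hconv a (by simp)).convexHull_eq]
    exact hcomp a (by simp)
  | cons a s ha hs ih =>
    have hU : (⋃ i ∈ Finset.cons a s ha, K i) = K a ∪ ⋃ i ∈ s, K i := by
      simp [Finset.cons_eq_insert, Set.biUnion_insert]
    have hUne : (⋃ i ∈ s, K i).Nonempty := by
      obtain ⟨b, hb⟩ := hs
      obtain ⟨x, hx⟩ := hKne b (Finset.mem_cons_of_mem hb)
      exact ⟨x, mem_biUnion hb hx⟩
    rw [hU, convexHull_union (hKne a (Finset.mem_cons_self a s)) hUne,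
      (hconv a (Finset.mem_cons_self a s)).convexHull_eq]
    exact aux_isCompact_convexJoin (hcomp a (Finset.mem_cons_self a s))
      (ih (fun i hi => hcomp i (Finset.mem_cons_of_mem hi))
        (fun i hi => hconv i (Finset.mem_cons_of_mem hi))
        (fun i hi => hKne i (Finset.mem_cons_of_mem hi)))

/-- Discrete face/Jensen lemma: if a finite convex combination of points of `X` lies in an
extreme subset `F` of `X`, then all points with nonzero weight lie in `F`, and moreover any
function which is "midpoint convex along `F`" satisfies the Jensen inequality for this
combination. -/
lemma aux_face_jensen {X F : Set E} (hXconv : Convex ℝ X) (hFface : IsExtreme ℝ X F)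
    {G : E → ℝ}
    (hGc : ∀ x ∈ F, ∀ y ∈ F, ∀ t ∈ Icc (0:ℝ) 1,
      G (t • x + (1 - t) • y) ≤ t * G x + (1 - t) * G y)
    {ι : Type*} (s : Finset ι) :
    ∀ (w : ι → ℝ) (z : ι → E), (∀ i ∈ s, 0 ≤ w i) → ∑ i ∈ s, w i = 1 →
      (∀ i ∈ s, z i ∈ X) → (∑ i ∈ s, w i • z i) ∈ F →
      (∀ i ∈ s, w i ≠ 0 → z i ∈ F) ∧
        G (∑ i ∈ s, w i • z i) ≤ ∑ i ∈ s, w i * G (z i) := by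
  induction s using Finset.cons_induction with
  | empty => intro w z _ h1 _ _; simp at h1
  | cons a s ha ih =>
    intro w z hw0 hw1 hzX hmem
    rw [Finset.sum_cons] at hw1 hmem
    by_cases hwa0 : w a = 0
    · have hz : w a • z a + ∑ i ∈ s, w i • z i = ∑ i ∈ s, w i • z i := by
        rw [hwa0, zero_smul, zero_add]
      have hsum1 : ∑ i ∈ s, w i = 1 := by rw [hwa0] at hw1; linarith
      obtain ⟨hmem', hineq'⟩ := ih w z (fun i hi => hw0 i (Finset.mem_cons_of_mem hi)) hsum1
        (fun i hi => hzX i (Finset.mem_cons_of_mem hi)) (hz ▸ hmem)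
      constructor
      · intro i hi hwi
        rcases Finset.mem_cons.1 hi with rfl | hi
        · exact absurd hwa0 hwi
        · exact hmem' i hi hwi
      · rw [Finset.sum_cons, Finset.sum_cons, hz, hwa0, zero_mul, zero_add]
        exact hineq'
    by_cases hwa1 : w a = 1
    · have hS0 : ∑ i ∈ s, w i = 0 := by rw [hwa1] at hw1; linarith
      have hwz : ∀ i ∈ s, w i = 0 := by
        intro i hi
        exact (Finset.sum_eq_zero_iff_of_nonneg
          (fun j hj => hw0 j (Finset.mem_cons_of_mem hj))).1 hS0 i hi
      have hz0 : ∑ i ∈ s, w i • z i = 0 :=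
        Finset.sum_eq_zero fun i hi => by rw [hwz i hi, zero_smul]
      have heq : w a • z a + ∑ i ∈ s, w i • z i = z a := by
        rw [hz0, add_zero, hwa1, one_smul]
      constructor
      · intro i hi hwi
        rcases Finset.mem_cons.1 hi with rfl | hi
        · exact heq ▸ hmem
        · exact absurd (hwz i hi) hwi
      · rw [Finset.sum_cons, Finset.sum_cons, heq]
        have : ∑ i ∈ s, w i * G (z i) = 0 :=
          Finset.sum_eq_zero fun i hi => by rw [hwz i hi, zero_mul]
        rw [this, hwa1, one_mul, add_zero]
    -- main case : 0 < w a < 1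
    have hwapos : 0 < w a := (hw0 a (Finset.mem_cons_self a s)).lt_of_ne (Ne.symm hwa0)
    have hSnn : 0 ≤ ∑ i ∈ s, w i :=
      Finset.sum_nonneg fun i hi => hw0 i (Finset.mem_cons_of_mem hi)
    set β := ∑ i ∈ s, w i with hβdef
    have hβeq : β = 1 - w a := by rw [hβdef]; linarith
    have hβpos : 0 < β := by
      rcases lt_or_eq_of_le hSnn with h | h
      · exact h
      · exact absurd (by linarith [h.symm] : w a = 1) hwa1
    have hβne : β ≠ 0 := ne_of_gt hβpos
    set w' : ι → ℝ := fun i => w i / β with hw'def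
    have hw'0 : ∀ i ∈ s, 0 ≤ w' i := fun i hi =>
      div_nonneg (hw0 i (Finset.mem_cons_of_mem hi)) (le_of_lt hβpos)
    have hw'1 : ∑ i ∈ s, w' i = 1 := by
      rw [hw'def]; rw [← Finset.sum_div]; exact div_self hβne
    set z' : E := ∑ i ∈ s, w' i • z i with hz'def
    have hz'X : z' ∈ X :=
      hXconv.sum_mem hw'0 hw'1 (fun i hi => hzX i (Finset.mem_cons_of_mem hi))
    have hkey : ∑ i ∈ s, w i • z i = β • z' := by
      rw [hz'def, Finset.smul_sum]
      refine Finset.sum_congr rfl fun i hi => ?_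
      rw [smul_smul, hw'def, mul_div_cancel₀ _ hβne]
    have hmem' : w a • z a + β • z' ∈ F := by rw [← hkey]; exact hmem
    have hseg : (w a • z a + β • z') ∈ openSegment ℝ (z a) z' :=
      ⟨w a, β, hwapos, hβpos, by linarith, rfl⟩
    have hzaF := hFface.2 (hzX a (Finset.mem_cons_self a s)) hz'X hmem' hseg
    have hz'F := hFface.right_mem_of_mem_openSegment (hzX a (Finset.mem_cons_self a s)) hz'X hmem' hseg
    obtain ⟨hmem'', hineq''⟩ := ih w' z hw'0 hw'1
      (fun i hi => hzX i (Finset.mem_cons_of_mem hi)) (hz'def ▸ hz'F)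
    constructor
    · intro i hi hwi
      rcases Finset.mem_cons.1 hi with rfl | hi
      · exact hzaF
      · exact hmem'' i hi (div_ne_zero hwi hβne)
    · have hGstep := hGc (z a) hzaF z' hz'F (w a) ⟨le_of_lt hwapos, by linarith⟩
      have h1mwa : (1 : ℝ) - w a = β := hβeq.symm
      rw [h1mwa] at hGstep
      have hβsum : β * ∑ i ∈ s, w' i * G (z i) = ∑ i ∈ s, w i * G (z i) := by
        rw [Finset.mul_sum]
        refine Finset.sum_congr rfl fun i hi => ?_
        rw [hw'def]; field_simp
      have hineq3 : β * G z' ≤ ∑ i ∈ s, w i * G (z i) := by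
        rw [← hβsum]
        exact mul_le_mul_of_nonneg_left hineq'' (le_of_lt hβpos)
      rw [Finset.sum_cons, Finset.sum_cons, hkey]
      calc G (w a • z a + β • z') ≤ w a * G (z a) + β * G z' := hGstep
        _ ≤ w a * G (z a) + ∑ i ∈ s, w i * G (z i) := by linarith

/-- Maximum of finitely many continuous affine functions. -/
lemma aux_exists_finmax {ι : Type*} (s : Finset ι) (hs : s.Nonempty)
    (L : ι → E →L[ℝ] ℝ) (c : ι → ℝ) :
    ∃ g : E → ℝ, Continuous g ∧ (∀ x, ∀ i ∈ s, L i x + c i ≤ g x) ∧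
      ∀ x, ∃ i ∈ s, g x = L i x + c i := by
  induction hs using Finset.Nonempty.cons_induction with
  | singleton a =>
    refine ⟨fun x => L a x + c a, ((L a).continuous.add continuous_const), ?_, ?_⟩
    · intro x i hi
      rw [Finset.mem_singleton] at hi
      subst hi; exact le_rfl
    · intro x; exact ⟨a, by simp, rfl⟩
  | cons a s ha hs ih =>
    obtain ⟨g, hgc, hgle, hgeq⟩ := ih
    refine ⟨fun x => max (L a x + c a) (g x),
      (((L a).continuous.add continuous_const).max hgc), ?_, ?_⟩
    · intro x i hi
      rcases Finset.mem_cons.1 hi with rfl | hi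
      · exact le_max_left _ _
      · exact (hgle x i hi).trans (le_max_right _ _)
    · intro x
      rcases le_total (L a x + c a) (g x) with h | h
      · obtain ⟨i, hi, hix⟩ := hgeq x
        refine ⟨i, Finset.mem_cons_of_mem hi, ?_⟩
        show max (L a x + c a) (g x) = _
        rw [max_eq_right h, hix]
      · refine ⟨a, Finset.mem_cons_self a s, ?_⟩
        show max (L a x + c a) (g x) = _
        rw [max_eq_left h]

end Aux

section Master

open Pointwise

variable {E : Type*} [AddCommGroup E] [Module ℝ E] [TopologicalSpace E]
    [IsTopologicalAddGroup E] [ContinuousSMul ℝ E] [T2Space E] [LocallyConvexSpace ℝ E]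

/-- Key approximation lemma: if `F` is a closed extreme subset of the compact convex set `X`,
`F ⊆ Y ⊆ X` with `Y` compact, and `G` is continuous on `Y` and "convex along `F`", then at every
point `x₀ ∈ F` there is a continuous affine function which is below `G` on `Y` and within `ε`
of `G` at `x₀`. -/
lemma aux_master {X F Y : Set E} (hXcomp : IsCompact X) (hXconv : Convex ℝ X)
    (hFface : IsExtreme ℝ X F) (hFY : F ⊆ Y) (hYX : Y ⊆ X) (hYcomp : IsCompact Y)
    {G : E → ℝ} (hG : ContinuousOn G Y)
    (hGc : ∀ x ∈ F, ∀ y ∈ F, ∀ t ∈ Icc (0:ℝ) 1,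
      G (t • x + (1 - t) • y) ≤ t * G x + (1 - t) * G y)
    {x₀ : E} (hx₀ : x₀ ∈ F) {ε : ℝ} (hε : 0 < ε) :
    ∃ (l : E →L[ℝ] ℝ) (c : ℝ), (∀ y ∈ Y, l y + c ≤ G y) ∧ G x₀ - ε < l x₀ + c := by
  classical
  have hYne : Y.Nonempty := ⟨x₀, hFY hx₀⟩
  set ε' : ℝ := ε / 4 with hε'def
  have hε' : 0 < ε' := by rw [hε'def]; linarith
  have hGYcomp : IsCompact (G '' Y) := hYcomp.image_of_continuousOn hG
  have hbddA : BddAbove (G '' Y) := hGYcomp.bddAbove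
  have hbddB : BddBelow (G '' Y) := hGYcomp.bddBelow
  set M : ℝ := sSup (G '' Y) with hMdef
  -- good convex neighborhoods
  have hnbhd : ∀ z ∈ Y, ∃ Nz : Set E, IsOpen Nz ∧ z ∈ Nz ∧ Convex ℝ Nz ∧
      (∀ y ∈ Y ∩ closure Nz, |G y - G z| < ε') := by
    intro z hz
    have hcont : ContinuousWithinAt G Y z := hG z hz
    have hball : {w : ℝ | |w - G z| < ε'} ∈ nhds (G z) := by
      have : {w : ℝ | |w - G z| < ε'} = Metric.ball (G z) ε' := by
        ext w; simp [Metric.mem_ball, Real.dist_eq]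
      rw [this]; exact Metric.ball_mem_nhds _ hε'
    have hpre : G ⁻¹' {w : ℝ | |w - G z| < ε'} ∈ nhdsWithin z Y := hcont hball
    rw [mem_nhdsWithin] at hpre
    obtain ⟨U, hUopen, hzU, hUsub⟩ := hpre
    -- shrink to convex neighborhood
    have hW0 : (fun v : E => z + v) ⁻¹' U ∈ nhds (0:E) := by
      have : ContinuousAt (fun v : E => z + v) 0 := by
        exact (continuous_const.add continuous_id).continuousAt
      apply this.preimage_mem_nhds
      simpa using hUopen.mem_nhds hzU
    obtain ⟨W₁, hW₁, hW₁sub⟩ := exists_nhds_zero_half hW0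
    obtain ⟨S, ⟨hSnhds, hSconv⟩, hSsub⟩ :=
      (LocallyConvexSpace.convex_basis_zero ℝ E).mem_iff.1 hW₁
    set V : Set E := interior S with hVdef
    have hVopen : IsOpen V := isOpen_interior
    have hV0 : (0:E) ∈ V := mem_interior_iff_mem_nhds.2 hSnhds
    have hVconv : Convex ℝ V := hSconv.interior
    refine ⟨(fun v : E => z + v) '' V, ?_, ⟨0, hV0, by simp⟩, hVconv.translate z, ?_⟩
    · exact (isOpenMap_add_left z) V hVopen
    · intro y hy
      have hycl : y ∈ ((fun v : E => z + v) '' V) + W₁ :=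
        aux_closure_subset_add hW₁ hy.2
      obtain ⟨p, hp, wv, hwv, hpw⟩ := hycl
      obtain ⟨v, hv, rfl⟩ := hp
      have hvW₁ : v ∈ W₁ := hSsub (interior_subset hv)
      have : y ∈ U := by
        have : z + (v + wv) ∈ U := mem_preimage.1 (hW₁sub v hvW₁ wv hwv)
        rw [← hpw]; convert this using 1; simp only [add_assoc]
      exact hUsub ⟨this, hy.1⟩
  choose! NN hNopen hNmem hNconv hNctl using hnbhd
  obtain ⟨T, hTY, hTcov⟩ := hYcomp.elim_nhds_subcover NN
    (fun z hz => (hNopen z hz).mem_nhds (hNmem z hz))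
  have hTne : T.Nonempty := by
    obtain ⟨y, hy⟩ := hYne
    have := hTcov hy
    rw [mem_iUnion₂] at this
    obtain ⟨z, hz, _⟩ := this
    exact ⟨z, hz⟩
  set P : E → Set E := fun z => Y ∩ NN z with hPdef
  set K : E → Set E := fun z => closure (convexHull ℝ (P z)) with hKdef
  set φ : E → ℝ := fun z => sInf (G '' P z) with hφdef
  set R : E → Set (E × ℝ) := fun z => (K z) ×ˢ Icc (φ z) M with hRdef
  have hPne : ∀ z ∈ T, (P z).Nonempty := fun z hz =>
    ⟨z, hTY z hz, hNmem z (hTY z hz)⟩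
  have hKX : ∀ z ∈ T, K z ⊆ X := by
    intro z hz
    refine closure_minimal (convexHull_min ?_ hXconv) hXcomp.isClosed
    exact fun y hy => hYX hy.1
  have hKcomp : ∀ z ∈ T, IsCompact (K z) := fun z hz =>
    hXcomp.of_isClosed_subset isClosed_closure (hKX z hz)
  have hKconv : ∀ z ∈ T, Convex ℝ (K z) := fun z hz =>
    (convex_convexHull ℝ (P z)).closure
  have hKN : ∀ z ∈ T, K z ⊆ closure (NN z) := by
    intro z hz
    refine closure_mono (convexHull_min ?_ (hNconv z (hTY z hz)))
    exact fun y hy => hy.2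
  have hφle : ∀ z ∈ T, ∀ y ∈ P z, φ z ≤ G y := by
    intro z hz y hy
    exact csInf_le (hbddB.mono (image_mono inter_subset_left)) ⟨y, hy, rfl⟩
  have hGM : ∀ y ∈ Y, G y ≤ M := fun y hy => le_csSup hbddA ⟨y, hy, rfl⟩
  have hφge : ∀ z ∈ T, ∀ k, k ∈ F → k ∈ K z → G k - 2 * ε' ≤ φ z := by
    intro z hz k hkF hkK
    have hkY : k ∈ Y := hFY hkF
    have hkN : k ∈ closure (NN z) := hKN z hz hkK
    have hkctl : |G k - G z| < ε' := hNctl z (hTY z hz) k ⟨hkY, hkN⟩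
    refine le_csInf ((hPne z hz).image G) ?_
    rintro b ⟨y, hy, rfl⟩
    have hyctl : |G y - G z| < ε' :=
      hNctl z (hTY z hz) y ⟨hy.1, subset_closure hy.2⟩
    rw [abs_lt] at hkctl hyctl
    linarith
  have hGmem : ∀ z ∈ T, ∀ y ∈ P z, (y, G y) ∈ R z := by
    intro z hz y hy
    exact ⟨subset_closure (subset_convexHull ℝ _ hy), hφle z hz y hy, hGM y hy.1⟩
  set C : Set (E × ℝ) := convexHull ℝ (⋃ z ∈ T, R z) with hCdef
  have hSC : ∀ y ∈ Y, (y, G y) ∈ C := by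
    intro y hy
    have := hTcov hy
    rw [mem_iUnion₂] at this
    obtain ⟨z, hz, hyN⟩ := this
    exact subset_convexHull ℝ _ (mem_biUnion hz (hGmem z hz y ⟨hy, hyN⟩))
  have hCcomp : IsCompact C := by
    refine aux_isCompact_convexHull_biUnion T hTne R
      (fun z hz => (hKcomp z hz).prod isCompact_Icc)
      (fun z hz => ((hKconv z hz).prod (convex_Icc _ _)))
      (fun z hz => ⟨(z, G z), hGmem z hz z ⟨hTY z hz, hNmem z (hTY z hz)⟩⟩)
  have hCconv : Convex ℝ C := convex_convexHull ℝ _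
  -- the point below the graph is not in C
  have hp₀ : ((x₀ : E), G x₀ - ε) ∉ C := by
    intro hmem
    rw [hCdef, convexHull_eq] at hmem
    obtain ⟨ι', t, w, q, hw0, hw1, hq, hcm⟩ := hmem
    rw [Finset.centerMass_eq_of_sum_1 _ _ hw1] at hcm
    have hfst : ∑ i ∈ t, w i • (q i).1 = x₀ := by
      have := congrArg Prod.fst hcm
      simpa [Prod.fst_sum] using this
    have hsnd : ∑ i ∈ t, w i * (q i).2 = G x₀ - ε := by
      have := congrArg Prod.snd hcm
      simpa [Prod.snd_sum, smul_eq_mul] using this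
    have hqR : ∀ i ∈ t, ∃ z, z ∈ T ∧ q i ∈ R z := by
      intro i hi
      have := hq i hi
      rw [mem_iUnion₂] at this
      obtain ⟨z, hz, hqz⟩ := this
      exact ⟨z, hz, hqz⟩
    choose! ζ hζT hζR using hqR
    have hqX : ∀ i ∈ t, (q i).1 ∈ X := fun i hi =>
      hKX (ζ i) (hζT i hi) (hζR i hi).1
    obtain ⟨hmemF, hjen⟩ := aux_face_jensen hXconv hFface hGc t w (fun i => (q i).1)
      hw0 hw1 hqX (by rw [hfst]; exact hx₀)
    have hterm : ∀ i ∈ t, w i * (G ((q i).1) - 2 * ε') ≤ w i * (q i).2 := by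
      intro i hi
      rcases eq_or_ne (w i) 0 with h0 | h0
      · simp [h0]
      · refine mul_le_mul_of_nonneg_left ?_ (hw0 i hi)
        exact le_trans (hφge (ζ i) (hζT i hi) ((q i).1) (hmemF i hi h0) (hζR i hi).1)
          (hζR i hi).2.1
    have h1 : ∑ i ∈ t, w i * (G ((q i).1) - 2 * ε')
        = (∑ i ∈ t, w i * G ((q i).1)) - 2 * ε' := by
      have hcongr : ∀ i ∈ t, w i * (G ((q i).1) - 2 * ε')
          = w i * G ((q i).1) - w i * (2 * ε') := fun i _ => by ring
      rw [Finset.sum_congr rfl hcongr, Finset.sum_sub_distrib, ← Finset.sum_mul, hw1, one_mul]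
    have h2 := Finset.sum_le_sum hterm
    rw [h1, hsnd] at h2
    rw [hfst] at hjen
    rw [hε'def] at h2
    linarith
  -- separate
  obtain ⟨Λ, u, hΛC, hΛp⟩ := geometric_hahn_banach_closed_point hCconv hCcomp.isClosed hp₀
  set β : ℝ := Λ ((0:E), (1:ℝ)) with hβdef
  have hdecomp : ∀ (x : E) (sθ : ℝ), Λ (x, sθ) = Λ (x, 0) + sθ * β := by
    intro x sθ
    have hxs : (x, sθ) = ((x, (0:ℝ)) + sθ • ((0:E), (1:ℝ))) := by
      simp [Prod.ext_iff]
    rw [hxs, map_add, Λ.map_smul, smul_eq_mul]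
  have hx₀Y : x₀ ∈ Y := hFY hx₀
  have h1 : Λ (x₀, G x₀) < u := hΛC _ (hSC x₀ hx₀Y)
  have h2 : u < Λ (x₀, G x₀ - ε) := hΛp
  rw [hdecomp] at h1 h2
  have hβ : β < 0 := by nlinarith
  have hβne : β ≠ 0 := ne_of_lt hβ
  refine ⟨(-β⁻¹) • (Λ.comp (ContinuousLinearMap.inl ℝ E ℝ)), u * β⁻¹, ?_, ?_⟩
  · intro y hy
    have hyC : Λ (y, G y) < u := hΛC _ (hSC y hy)
    rw [hdecomp] at hyC
    have hΛy : Λ.comp (ContinuousLinearMap.inl ℝ E ℝ) y = Λ (y, 0) := by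
      simp [ContinuousLinearMap.inl_apply]
    rw [ContinuousLinearMap.smul_apply, hΛy]
    have hgoal : (u - Λ (y, 0)) / β ≤ G y := by
      rw [div_le_iff_of_neg hβ]
      nlinarith
    have : -β⁻¹ * Λ (y, 0) + u * β⁻¹ = (u - Λ (y, 0)) / β := by
      field_simp
      ring
    rw [smul_eq_mul, this]
    exact hgoal
  · have hΛx : Λ.comp (ContinuousLinearMap.inl ℝ E ℝ) x₀ = Λ (x₀, 0) := by
      simp [ContinuousLinearMap.inl_apply]
    rw [ContinuousLinearMap.smul_apply, hΛx, smul_eq_mul]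
    have hgoal : G x₀ - ε < (u - Λ (x₀, 0)) / β := by
      rw [lt_div_iff_of_neg hβ]
      nlinarith
    have : -β⁻¹ * Λ (x₀, 0) + u * β⁻¹ = (u - Λ (x₀, 0)) / β := by
      field_simp
      ring
    rw [this]
    exact hgoal

/-- Globally defined convex continuous minorant which is uniformly close to `G` on `F`. -/
lemma aux_minorant {X F Y : Set E} (hXcomp : IsCompact X) (hXconv : Convex ℝ X)
    (hFface : IsExtreme ℝ X F) (hFne : F.Nonempty) (hFcl : IsClosed F)
    (hFY : F ⊆ Y) (hYX : Y ⊆ X) (hYcomp : IsCompact Y)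
    {G : E → ℝ} (hG : ContinuousOn G Y)
    (hGc : ∀ x ∈ F, ∀ y ∈ F, ∀ t ∈ Icc (0:ℝ) 1,
      G (t • x + (1 - t) • y) ≤ t * G x + (1 - t) * G y)
    {ε : ℝ} (hε : 0 < ε) :
    ∃ g : E → ℝ, Continuous g ∧
      (∀ x y : E, ∀ t ∈ Icc (0:ℝ) 1, g (t • x + (1 - t) • y) ≤ t * g x + (1 - t) * g y) ∧
      (∀ y ∈ Y, g y ≤ G y) ∧ (∀ x ∈ F, G x - ε ≤ g x) := by
  classical
  have hFcomp : IsCompact F := hYcomp.of_isClosed_subset hFcl hFY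
  have step : ∀ x₀ ∈ F, ∃ (l : E →L[ℝ] ℝ) (c : ℝ) (U : Set E),
      (∀ y ∈ Y, l y + c ≤ G y) ∧ IsOpen U ∧ x₀ ∈ U ∧
      (∀ x ∈ F, x ∈ U → G x - ε ≤ l x + c) := by
    intro x₀ hx₀
    obtain ⟨l, c, hmin, hpt⟩ := aux_master hXcomp hXconv hFface hFY hYX hYcomp hG hGc hx₀
      (show (0:ℝ) < ε / 2 by linarith)
    have hcF : ContinuousOn (fun x => l x + c - G x) F :=
      ((l.continuous.add continuous_const).continuousOn).sub (hG.mono hFY)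
    have hpre : (fun x => l x + c - G x) ⁻¹' (Ioi (-ε)) ∈ nhdsWithin x₀ F := by
      refine hcF x₀ hx₀ (Ioi_mem_nhds ?_)
      dsimp only
      linarith
    rw [mem_nhdsWithin] at hpre
    obtain ⟨U, hUopen, hx₀U, hUsub⟩ := hpre
    refine ⟨l, c, U, hmin, hUopen, hx₀U, ?_⟩
    intro x hxF hxU
    have := hUsub ⟨hxU, hxF⟩
    simp only [mem_preimage, mem_Ioi] at this
    linarith
  choose! l c U hmin hUopen hUmem hUctl using step
  obtain ⟨T, hTF, hTcov⟩ := hFcomp.elim_nhds_subcover U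
    (fun x hx => (hUopen x hx).mem_nhds (hUmem x hx))
  have hTne : T.Nonempty := by
    obtain ⟨x, hx⟩ := hFne
    have := hTcov hx
    rw [mem_iUnion₂] at this
    obtain ⟨z, hz, _⟩ := this
    exact ⟨z, hz⟩
  obtain ⟨g, hgc, hgle, hgeq⟩ := aux_exists_finmax T hTne l c
  refine ⟨g, hgc, ?_, ?_, ?_⟩
  · intro x y t ht
    obtain ⟨i, hi, hieq⟩ := hgeq (t • x + (1 - t) • y)
    have haff : l i (t • x + (1 - t) • y) + c i
        = t * (l i x + c i) + (1 - t) * (l i y + c i) := by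
      rw [map_add, _root_.map_smul, _root_.map_smul, smul_eq_mul, smul_eq_mul]
      ring
    rw [hieq, haff]
    exact add_le_add (mul_le_mul_of_nonneg_left (hgle x i hi) ht.1)
      (mul_le_mul_of_nonneg_left (hgle y i hi) (by linarith [ht.2]))
  · intro y hy
    obtain ⟨i, hi, hieq⟩ := hgeq y
    rw [hieq]
    exact hmin i (hTF i hi) y hy
  · intro x hx
    have := hTcov hx
    rw [mem_iUnion₂] at this
    obtain ⟨z, hz, hxU⟩ := this
    calc G x - ε ≤ l z x + c z := hUctl z (hTF z hz) x hx hxU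
      _ ≤ g x := hgle x z hz

end Master

/-- A boundary measure on a closed face `F` of a metrizable compact convex set `X` is (via the
inclusion `F ↪ X`) a boundary measure on `X`: a probability measure concentrated on `F` which
is maximal in the Choquet order of `F` is concentrated on `X` and maximal in the Choquet order
of `X`. -/
theorem boundary_measure_of_closedFace
    {E : Type*} [AddCommGroup E] [Module ℝ E] [TopologicalSpace E]
    [IsTopologicalAddGroup E] [ContinuousSMul ℝ E] [T2Space E]
    [LocallyConvexSpace ℝ E] [SeparatingDual ℝ E]
    [MeasurableSpace E] [BorelSpace E]
    (X : Set E) (hXne : X.Nonempty) (hXcomp : IsCompact X) (hXconv : Convex ℝ X)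
    [TopologicalSpace.MetrizableSpace X]
    (F : Set E) (hFne : F.Nonempty) (hFcl : IsClosed F) (hFface : IsExtreme ℝ X F)
    (μ : Measure E) [IsProbabilityMeasure μ] (hμF : μ F = 1)
    (hmaxF : ∀ ρ : Measure E, IsProbabilityMeasure ρ → ρ F = 1 →
      ChoquetLE F μ ρ → ρ = μ) :
    μ X = 1 ∧
    ∀ ρ : Measure E, IsProbabilityMeasure ρ → ρ X = 1 → ChoquetLE X μ ρ → ρ = μ := by
  classical
  have hFX : F ⊆ X := hFface.1
  have hXm : MeasurableSet X := hXcomp.isClosed.measurableSet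
  have hFm : MeasurableSet F := hFcl.measurableSet
  have hFcomp : IsCompact F := hXcomp.of_isClosed_subset hFcl hFX
  have hμX : μ X = 1 := le_antisymm prob_le_one (hμF ▸ measure_mono hFX)
  -- the distance-to-F function
  letI : MetricSpace X := TopologicalSpace.metrizableSpaceMetric X
  set F' : Set X := Subtype.val ⁻¹' F with hF'def
  have hF'cl : IsClosed F' := hFcl.preimage continuous_subtype_val
  have hF'ne : F'.Nonempty := by
    obtain ⟨x, hx⟩ := hFne
    exact ⟨⟨x, hFX hx⟩, hx⟩
  set d : E → ℝ := fun e => if h : e ∈ X then Metric.infDist (⟨e, h⟩ : X) F' else 0 with hddef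
  have hd_nonneg : ∀ e, 0 ≤ d e := by
    intro e
    simp only [hddef]
    by_cases h : e ∈ X
    · rw [dif_pos h]; exact Metric.infDist_nonneg
    · rw [dif_neg h]
  have hd_cont : ContinuousOn d X := by
    rw [continuousOn_iff_continuous_restrict]
    have : X.restrict d = fun p : X => Metric.infDist p F' := by
      funext p
      exact dif_pos p.2
    rw [show X.domRestrict d = X.restrict d from rfl, this]
    exact Metric.continuous_infDist_pt F'
  have hd_zero : ∀ x ∈ F, d x = 0 := by
    intro x hx
    simp only [hddef]
    rw [dif_pos (hFX hx)]
    exact Metric.infDist_zero_of_mem hx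
  have hd_pos : ∀ x ∈ X, x ∉ F → 0 < d x := by
    intro x hx hxF
    simp only [hddef]
    rw [dif_pos hx]
    exact (hF'cl.notMem_iff_infDist_pos hF'ne).1 hxF
  -- Step B: any probability ρ on X above μ (Choquet on X) is concentrated on F.
  have key : ∀ ρ : Measure E, IsProbabilityMeasure ρ → ρ X = 1 → ChoquetLE X μ ρ → ρ F = 1 := by
    intro ρ hρprob hρX hChoq
    set G : E → ℝ := fun e => -(d e) with hGdef
    have hG_cont : ContinuousOn G X := hd_cont.neg
    have hG_np : ∀ e, G e ≤ 0 := fun e => neg_nonpos.2 (hd_nonneg e)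
    have hG_zero : ∀ x ∈ F, G x = 0 := fun x hx => by
      simp only [hGdef]; simp [hd_zero x hx]
    have hGc : ∀ x ∈ F, ∀ y ∈ F, ∀ t ∈ Icc (0:ℝ) 1,
        G (t • x + (1 - t) • y) ≤ t * G x + (1 - t) * G y := by
      intro x hx y hy t ht
      rw [hG_zero x hx, hG_zero y hy]
      simpa using hG_np (t • x + (1 - t) • y)
    have hintG : IntegrableOn G X ρ := hG_cont.integrableOn_compact hXcomp
    have hFaeμ : ∀ᵐ x ∂(μ.restrict X), x ∈ F := by
      rw [ae_iff]
      have hsub : {x | ¬ x ∈ F} = Fᶜ := rfl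
      rw [hsub, Measure.restrict_apply (hFm.compl)]
      have : μ (Fᶜ ∩ X) ≤ μ Fᶜ := measure_mono inter_subset_left
      have hcompl : μ Fᶜ = 0 := by
        have := measure_compl hFm (measure_ne_top μ F)
        rw [hμF, measure_univ] at this
        simpa using this
      exact le_antisymm (hcompl ▸ this) (zero_le)
    have hkey2 : ∀ ε : ℝ, 0 < ε → -ε ≤ ∫ x in X, G x ∂ρ := by
      intro ε hε
      obtain ⟨g, hgc, hgconv, hgle, hgapprox⟩ := aux_minorant hXcomp hXconv hFface hFne hFcl
        hFX (le_refl X : X ⊆ X) hXcomp hG_cont hGc hε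
      have hintg_μ : IntegrableOn g X μ := hgc.continuousOn.integrableOn_compact hXcomp
      have hintg_ρ : IntegrableOn g X ρ := hgc.continuousOn.integrableOn_compact hXcomp
      have hμbound : -ε ≤ ∫ x in X, g x ∂μ := by
        have hconstint : Integrable (fun _ : E => -ε) (μ.restrict X) := integrable_const _
        have hmono : (fun _ : E => -ε) ≤ᵐ[μ.restrict X] g := by
          filter_upwards [hFaeμ] with x hx
          have := hgapprox x hx
          rw [hG_zero x hx] at this
          linarith
        have := integral_mono_ae hconstint hintg_μ hmono
        rwa [integral_const, measureReal_def, Measure.restrict_apply_univ, hμX,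
          ENNReal.toReal_one, one_smul] at this
      have hchoqg : ∫ x in X, g x ∂μ ≤ ∫ x in X, g x ∂ρ :=
        hChoq g hgc.continuousOn (fun x _ y _ t ht => hgconv x y t ht)
      have hρbound : ∫ x in X, g x ∂ρ ≤ ∫ x in X, G x ∂ρ :=
        setIntegral_mono_on hintg_ρ hintG hXm (fun x hx => hgle x hx)
      linarith
    have hG_int_np : ∫ x in X, G x ∂ρ ≤ 0 :=
      integral_nonpos (fun x => hG_np x)
    have hG_int_zero : ∫ x in X, G x ∂ρ = 0 := by
      by_contra hne
      have hlt : ∫ x in X, G x ∂ρ < 0 := lt_of_le_of_ne hG_int_np hne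
      have := hkey2 (-(∫ x in X, G x ∂ρ) / 2) (by linarith)
      linarith
    have hd_int_zero : ∫ x in X, d x ∂ρ = 0 := by
      have : ∫ x in X, d x ∂ρ = -∫ x in X, G x ∂ρ := by
        rw [← integral_neg]
        refine integral_congr_ae (Filter.Eventually.of_forall fun x => ?_)
        simp [hGdef]
      rw [this, hG_int_zero, neg_zero]
    have hint_d : Integrable d (ρ.restrict X) := hd_cont.integrableOn_compact hXcomp
    have hdae : d =ᵐ[ρ.restrict X] 0 :=
      (integral_eq_zero_iff_of_nonneg (fun x => hd_nonneg x) hint_d).1 hd_int_zero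
    have hzero : (ρ.restrict X) {x | d x ≠ 0} = 0 := by
      have : {x | d x ≠ 0} = {x | ¬ d x = (0 : E → ℝ) x} := rfl
      rw [this]
      exact hdae
    have hXdiffF : ρ (X \ F) = 0 := by
      have hsub : X \ F ⊆ {x | d x ≠ 0} := fun x hx =>
        ne_of_gt (hd_pos x hx.1 hx.2)
      have h1 : (ρ.restrict X) (X \ F) = ρ (X \ F) := by
        rw [Measure.restrict_apply (hXm.diff hFm),
          inter_eq_self_of_subset_left diff_subset]
      refine le_antisymm ?_ (zero_le)
      calc ρ (X \ F) = (ρ.restrict X) (X \ F) := h1.symm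
        _ ≤ (ρ.restrict X) {x | d x ≠ 0} := measure_mono hsub
        _ = 0 := hzero
    have h1le : (1:ENNReal) ≤ ρ F := by
      calc (1:ENNReal) = ρ X := hρX.symm
        _ = ρ (F ∪ (X \ F)) := by rw [union_diff_cancel hFX]
        _ ≤ ρ F + ρ (X \ F) := measure_union_le _ _
        _ = ρ F := by rw [hXdiffF, add_zero]
    exact le_antisymm prob_le_one h1le
  refine ⟨hμX, ?_⟩
  intro ρ hρprob hρX hChoq
  have hρF : ρ F = 1 := key ρ hρprob hρX hChoq
  refine hmaxF ρ hρprob hρF ?_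
  -- ChoquetLE F μ ρ
  intro f hf hfconv
  have hintf_μ : IntegrableOn f F μ := hf.integrableOn_compact hFcomp
  have hintf_ρ : IntegrableOn f F ρ := hf.integrableOn_compact hFcomp
  have hrestμ : μ.restrict F = μ.restrict X := by
    refine Measure.restrict_congr_set ?_
    rw [ae_eq_set]
    constructor
    · have : F \ X = ∅ := by
        rw [diff_eq_empty]; exact hFX
      rw [this]; exact measure_empty
    · have hsub : X \ F ⊆ Fᶜ := fun x hx => hx.2
      have hcompl : μ Fᶜ = 0 := by
        have := measure_compl hFm (measure_ne_top μ F)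
        rw [hμF, measure_univ] at this
        simpa using this
      exact le_antisymm (hcompl ▸ measure_mono hsub) (zero_le)
  have hrestρ : ρ.restrict F = ρ.restrict X := by
    refine Measure.restrict_congr_set ?_
    rw [ae_eq_set]
    constructor
    · have : F \ X = ∅ := by
        rw [diff_eq_empty]; exact hFX
      rw [this]; exact measure_empty
    · have hsub : X \ F ⊆ Fᶜ := fun x hx => hx.2
      have hcompl : ρ Fᶜ = 0 := by
        have := measure_compl hFm (measure_ne_top ρ F)
        rw [hρF, measure_univ] at this
        simpa using this
      exact le_antisymm (hcompl ▸ measure_mono hsub) (zero_le)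
  have hmain : ∀ ε : ℝ, 0 < ε → ∫ x in F, f x ∂μ ≤ (∫ x in F, f x ∂ρ) + ε := by
    intro ε hε
    obtain ⟨g, hgc, hgconv, hgle, hgapprox⟩ := aux_minorant hXcomp hXconv hFface hFne hFcl
      (le_refl F : F ⊆ F) hFX hFcomp hf hfconv hε
    have hintg_μ : IntegrableOn g F μ := hgc.continuousOn.integrableOn_compact hFcomp
    have hintg_ρ : IntegrableOn g F ρ := hgc.continuousOn.integrableOn_compact hFcomp
    have step1 : ∫ x in F, f x ∂μ ≤ (∫ x in F, g x ∂μ) + ε := by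
      have hmono : ∫ x in F, f x ∂μ ≤ ∫ x in F, (fun x => g x + ε) x ∂μ := by
        refine setIntegral_mono_on hintf_μ (hintg_μ.add (integrable_const _)) hFm ?_
        intro x hx
        have := hgapprox x hx
        linarith
      have hadd : ∫ x in F, (fun x => g x + ε) x ∂μ = (∫ x in F, g x ∂μ) + ε := by
        rw [integral_add hintg_μ (integrable_const _), integral_const, measureReal_def,
          Measure.restrict_apply_univ, hμF, ENNReal.toReal_one, one_smul]
      linarith [hmono, hadd.le, hadd.ge]
    have step2 : ∫ x in F, g x ∂μ = ∫ x in X, g x ∂μ := by rw [hrestμ]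
    have step3 : ∫ x in X, g x ∂μ ≤ ∫ x in X, g x ∂ρ :=
      hChoq g hgc.continuousOn (fun x _ y _ t ht => hgconv x y t ht)
    have step4 : ∫ x in X, g x ∂ρ = ∫ x in F, g x ∂ρ := by rw [hrestρ]
    have step5 : ∫ x in F, g x ∂ρ ≤ ∫ x in F, f x ∂ρ :=
      setIntegral_mono_on hintg_ρ hintf_ρ hFm (fun x hx => hgle x hx)
    linarith
  by_contra hlt
  push_neg at hlt
  have := hmain ((∫ x in F, f x ∂μ - ∫ x in F, f x ∂ρ) / 2) (by linarith)
  linarith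
end
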